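/- For every n ≥ 0, the coefficients of the Markov–Fibonacci numerator Q_{n+1} are products of two binomial coefficients: for all integers i ≥ 0 and 0 ≤ j ≤ n, the coefficient of u^i v^j w^{n+1−i−j} in Q_{n+1} is A_{i,j}(n+1) = C(n−j, n+1−i−j)·C(i+j, j); moreover the coefficient of v^{n+1} (the case i = 0, j = n+1) equals 1. -/
import Mathlib


open MvPolynomial

/-- The Markov–Fibonacci numerator polynomials `Q n ∈ ℤ[u,v,w]` (with `u = X 0`,
`v = X 1`, `w = X 2`), defined by `Q 0 = 1`, `Q 1 = u + v` and
`Q (n+2) = (u+v+w)·Q (n+1) - v·w·Q n`. `Q n` is the numerator of the Markov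
polynomial `M_{1/n}`. -/
noncomputable def Q : ℕ → MvPolynomial (Fin 3) ℤ
  | 0 => 1
  | 1 => X 0 + X 1
  | (n + 2) => (X 0 + X 1 + X 2) * Q (n + 1) - X 1 * X 2 * Q n

/-- `zchoose n k` is the binomial coefficient `C(n,k)` for integer arguments,
equal to `0` unless `0 ≤ k ≤ n`. -/
def zchoose (n k : ℤ) : ℤ := if 0 ≤ k ∧ k ≤ n then n.toNat.choose k.toNat else 0

lemma zchoose_of_lt {n k : ℤ} (h : n < k) : zchoose n k = 0 := by
  unfold zchoose; rw [if_neg]; omega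

lemma zchoose_of_neg {n k : ℤ} (h : k < 0) : zchoose n k = 0 := by
  unfold zchoose; rw [if_neg]; omega

lemma zchoose_eq_one {a k : ℤ} (hk : k = 0) (ha : 0 ≤ a) : zchoose a k = 1 := by
  subst hk; unfold zchoose; rw [if_pos ⟨le_refl 0, ha⟩]; simp

lemma zchoose_pascal' (a b a' b' : ℤ) (h : a ≠ 0 ∨ b ≠ 0) (h1 : a' = a - 1) (h2 : b' = b - 1) :
    zchoose a b = zchoose a' b' + zchoose a' b := by
  subst h1; subst h2
  unfold zchoose
  rcases lt_or_ge b 0 with hb | hb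
  · rw [if_neg (by omega), if_neg (by omega), if_neg (by omega)]; ring
  rcases lt_or_ge a b with hab | hab
  · rw [if_neg (by omega), if_neg (by omega), if_neg (by omega)]; ring
  rcases eq_or_lt_of_le hb with hb0 | hb1
  · have ha1 : 1 ≤ a := by omega
    rw [if_pos (by omega), if_neg (by omega), if_pos (by omega)]
    simp [show b.toNat = 0 by omega]
  · rcases eq_or_lt_of_le hab with hab0 | hab1
    · rw [if_pos (by omega), if_pos (by omega), if_neg (by omega)]
      rw [show (b - 1).toNat = (a - 1).toNat by omega, show b.toNat = a.toNat by omega]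
      simp [Nat.choose_self]
    · rw [if_pos (by omega), if_pos (by omega), if_pos (by omega)]
      rw [show a.toNat = (a - 1).toNat + 1 by omega, show b.toNat = (b - 1).toNat + 1 by omega,
        Nat.choose_succ_succ']
      push_cast; ring

/-- The conjectured coefficient of `u^i v^j w^(m-i-j)` in `Q m`. -/
def cc (m i j : ℕ) : ℤ :=
  zchoose ((m : ℤ) - 1 - j) ((m : ℤ) - i - j) * ((i + j).choose j : ℤ) +
    (if i = 0 ∧ j = m then 1 else 0)

lemma cc_zero (m j : ℕ) : cc m 0 j = if j = m then 1 else 0 := by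
  unfold cc
  rw [zchoose_of_lt (by omega)]
  simp

lemma cc_eq' (m i j : ℕ) (a b : ℤ) (h : ¬(i = 0 ∧ j = m))
    (ha : a = (m : ℤ) - 1 - j) (hb : b = (m : ℤ) - i - j) :
    cc m i j = zchoose a b * ((i + j).choose j : ℤ) := by
  subst ha; subst hb; unfold cc; rw [if_neg h, add_zero]

lemma keyA (n i j k : ℕ) (hm : i + j + k = n + 2) :
    cc (n+2) i j
      = (if i = 0 then 0 else cc (n+1) (i-1) j)
      + (if j = 0 then 0 else cc (n+1) i (j-1))
      + (if k = 0 then 0 else cc (n+1) i j)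
      - (if j = 0 then 0 else if k = 0 then 0 else cc n i (j-1)) := by
  rcases Nat.eq_zero_or_pos i with rfl | hi
  · simp only [cc_zero]
    split_ifs <;> omega
  obtain ⟨i', rfl⟩ : ∃ i', i = i' + 1 := ⟨i - 1, by omega⟩
  rw [if_neg (Nat.succ_ne_zero _), Nat.add_sub_cancel]
  rcases eq_or_ne j (n+1) with rfl | hj
  · -- then i' = 0 and k = 0
    obtain rfl : i' = 0 := by omega
    obtain rfl : k = 0 := by omega
    rw [if_neg (Nat.succ_ne_zero n), if_pos rfl, if_neg (Nat.succ_ne_zero n), if_pos rfl,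
        Nat.add_sub_cancel, cc_zero (n+1) (n+1), if_pos rfl]
    rw [cc_eq' (n+2) (0+1) (n+1) 0 0 (by omega) (by push_cast; ring) (by push_cast; ring),
        cc_eq' (n+1) (0+1) n 0 0 (by omega) (by push_cast; ring) (by push_cast; ring),
        zchoose_eq_one rfl le_rfl]
    rw [show 0 + 1 + (n + 1) = (n + 1) + 1 from by ring, Nat.choose_succ_self_right,
        show 0 + 1 + n = n + 1 from by ring, Nat.choose_succ_self_right]
    push_cast; ring
  · -- j ≤ n, i ≥ 1 : the indicator terms all vanish
    have hjn : j ≤ n := by omega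
    rcases Nat.eq_zero_or_pos j with rfl | hjpos
    · rw [if_pos rfl, if_pos rfl]
      rcases Nat.eq_zero_or_pos k with rfl | hk
      · -- i' + 1 = n + 2
        obtain rfl : i' = n + 1 := by omega
        rw [if_pos rfl]
        rw [cc_eq' _ _ _ ((n:ℤ)+1) 0 (by omega) (by push_cast; ring) (by push_cast; omega),
            cc_eq' _ _ _ ((n:ℤ)) 0 (by omega) (by push_cast; ring) (by push_cast; omega)]
        rw [zchoose_eq_one rfl (by omega), zchoose_eq_one rfl (by omega)]
        simp
      · rw [if_neg (by omega)]
        rw [cc_eq' _ _ _ ((n:ℤ)+1) ((n:ℤ) - i' + 1) (by omega) (by push_cast; ring) (by push_cast; ring),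
            cc_eq' _ _ _ ((n:ℤ)) ((n:ℤ) - i' + 1) (by omega) (by push_cast; ring) (by push_cast; ring),
            cc_eq' _ _ _ ((n:ℤ)) ((n:ℤ) - i') (by omega) (by push_cast; ring) (by push_cast; ring)]
        simp only [Nat.choose_zero_right, Nat.cast_one, mul_one]
        rw [zchoose_pascal' ((n:ℤ)+1) ((n:ℤ) - i' + 1) ((n:ℤ)) ((n:ℤ) - i') (by left; omega) (by ring) (by ring)]
        push_cast; ring
    obtain ⟨j', rfl⟩ : ∃ j', j = j' + 1 := ⟨j - 1, by omega⟩
    rw [if_neg (Nat.succ_ne_zero _), if_neg (Nat.succ_ne_zero _), Nat.add_sub_cancel]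
    rcases Nat.eq_zero_or_pos k with rfl | hk
    · rw [if_pos rfl, if_pos rfl]
      -- i' + 1 + j' + 1 = n + 2, so all the "k" binomial args are 0
      rw [cc_eq' _ _ _ ((n:ℤ) - j') 0 (by omega) (by push_cast; ring) (by push_cast; omega),
          cc_eq' _ _ _ ((n:ℤ) - j' - 1) 0 (by omega) (by push_cast; ring) (by push_cast; omega),
          cc_eq' _ _ _ ((n:ℤ) - j') 0 (by omega) (by push_cast; ring) (by push_cast; omega)]
      rw [zchoose_eq_one rfl (by omega), zchoose_eq_one rfl (by omega)]
      rw [show i' + 1 + (j' + 1) = (i' + j' + 1) + 1 from by ring,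
          show i' + (j' + 1) = i' + j' + 1 from by ring,
          show i' + 1 + j' = i' + j' + 1 from by ring,
          Nat.choose_succ_succ' (i' + j' + 1) j']
      push_cast; ring
    · rw [if_neg (by omega), if_neg (by omega)]
      rw [cc_eq' _ _ _ ((n:ℤ) - j') ((n:ℤ) - i' - j') (by omega) (by push_cast; ring) (by push_cast; ring),
          cc_eq' _ _ _ ((n:ℤ) - j' - 1) ((n:ℤ) - i' - j') (by omega) (by push_cast; ring) (by push_cast; ring),
          cc_eq' _ _ _ ((n:ℤ) - j') ((n:ℤ) - i' - j') (by omega) (by push_cast; ring) (by push_cast; ring),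
          cc_eq' _ _ _ ((n:ℤ) - j' - 1) ((n:ℤ) - i' - j' - 1) (by omega) (by push_cast; ring) (by push_cast; ring),
          cc_eq' _ _ _ ((n:ℤ) - j' - 1) ((n:ℤ) - i' - j' - 1) (by omega) (by push_cast; ring) (by push_cast; ring)]
      rw [zchoose_pascal' ((n:ℤ) - j') ((n:ℤ) - i' - j') ((n:ℤ) - j' - 1) ((n:ℤ) - i' - j' - 1)
            (by left; omega) (by ring) (by ring)]
      rw [show i' + 1 + (j' + 1) = (i' + j' + 1) + 1 from by ring,
          show i' + (j' + 1) = i' + j' + 1 from by ring,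
          show i' + 1 + j' = i' + j' + 1 from by ring,
          Nat.choose_succ_succ' (i' + j' + 1) j']
      push_cast; ring

/-- `AA m i j k` is the conjectured coefficient of `u^i v^j w^k` in `Q m`. -/
def AA (m i j k : ℕ) : ℤ := if i + j + k = m then cc m i j else 0

lemma if_AA (c : Prop) [Decidable c] (m i j k : ℕ) (h : ¬c → i + j + k = m) :
    (if c then (0:ℤ) else AA m i j k) = (if c then 0 else cc m i j) := by
  split_ifs with h'
  · rfl
  · rw [AA, if_pos (h h')]

lemma if_AA_zero (c : Prop) [Decidable c] (m i j k : ℕ) (h : ¬c → ¬(i + j + k = m)) :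
    (if c then (0:ℤ) else AA m i j k) = 0 := by
  split_ifs with h'
  · rfl
  · rw [AA, if_neg (h h')]

lemma keyAA (n i j k : ℕ) :
    AA (n+2) i j k
      = (if i = 0 then 0 else AA (n+1) (i-1) j k)
      + (if j = 0 then 0 else AA (n+1) i (j-1) k)
      + (if k = 0 then 0 else AA (n+1) i j (k-1))
      - (if j = 0 then 0 else if k = 0 then 0 else AA n i (j-1) (k-1)) := by
  by_cases hm : i + j + k = n + 2
  · rw [AA, if_pos hm, keyA n i j k hm,
      if_AA (i = 0) (n+1) (i-1) j k (fun h => by omega),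
      if_AA (j = 0) (n+1) i (j-1) k (fun h => by omega),
      if_AA (k = 0) (n+1) i j (k-1) (fun h => by omega)]
    congr 1
    by_cases hj : j = 0
    · rw [if_pos hj, if_pos hj]
    · rw [if_neg hj, if_neg hj, if_AA (k = 0) n i (j-1) (k-1) (fun h => by omega)]
  · rw [AA, if_neg hm,
      if_AA_zero (i = 0) (n+1) (i-1) j k (fun h => by omega),
      if_AA_zero (j = 0) (n+1) i (j-1) k (fun h => by omega),
      if_AA_zero (k = 0) (n+1) i j (k-1) (fun h => by omega)]
    have : (if j = 0 then (0:ℤ) else if k = 0 then 0 else AA n i (j-1) (k-1)) = 0 := by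
      by_cases hj : j = 0
      · rw [if_pos hj]
      · rw [if_neg hj, if_AA_zero (k = 0) n i (j-1) (k-1) (fun h => by omega)]
    rw [this]; ring

lemma coeffQ : ∀ n i j k : ℕ,
    MvPolynomial.coeff
        (Finsupp.single 0 i + Finsupp.single 1 j + Finsupp.single 2 k) (Q n)
      = AA n i j k
  | 0, i, j, k => by
    rw [show Q 0 = 1 from by rw [Q], coeff_one, AA]
    by_cases h : i = 0 ∧ j = 0 ∧ k = 0
    · obtain ⟨rfl, rfl, rfl⟩ := h
      rw [if_pos (by simp), if_pos rfl, cc_zero, if_pos rfl]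
    · rw [if_neg, if_neg (by omega)]
      intro he
      rw [show (0 : Fin 3 →₀ ℕ) = Finsupp.single 0 0 + Finsupp.single 1 0 + Finsupp.single 2 0
          from by simp] at he
      have h0 := DFunLike.congr_fun he 0
      have h1 := DFunLike.congr_fun he 1
      have h2 := DFunLike.congr_fun he 2
      simp [Finsupp.single_apply] at h0 h1 h2
      exact h ⟨h0.symm, h1.symm, h2.symm⟩
  | 1, i, j, k => by
    rw [show Q 1 = X 0 + X 1 from by rw [Q], coeff_add, coeff_X', coeff_X', AA]
    have key : ∀ a b : ℕ, (Finsupp.single 0 a + Finsupp.single 1 b : Fin 3 →₀ ℕ)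
        = Finsupp.single 0 i + Finsupp.single 1 j + Finsupp.single 2 k
        ↔ (i = a ∧ j = b ∧ k = 0) := by
      intro a b
      constructor
      · intro he
        refine ⟨?_, ?_, ?_⟩
        · have := DFunLike.congr_fun he 0; simp [Finsupp.single_apply] at this; omega
        · have := DFunLike.congr_fun he 1; simp [Finsupp.single_apply] at this; omega
        · have := DFunLike.congr_fun he 2; simp [Finsupp.single_apply] at this; omega
      · rintro ⟨rfl, rfl, rfl⟩; simp
    have e0 : (Finsupp.single 0 1 : Fin 3 →₀ ℕ)
        = Finsupp.single 0 1 + Finsupp.single 1 0 := by simp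
    have e1 : (Finsupp.single 1 1 : Fin 3 →₀ ℕ)
        = Finsupp.single 0 0 + Finsupp.single 1 1 := by simp
    rw [e0, e1]
    by_cases h1 : i = 1 ∧ j = 0 ∧ k = 0
    · obtain ⟨rfl, rfl, rfl⟩ := h1
      rw [if_pos ((key 1 0).mpr ⟨rfl, rfl, rfl⟩), if_neg, if_pos rfl]
      · unfold cc
        rw [zchoose_eq_one (by norm_num) (by norm_num)]
        norm_num
      · rw [key 0 1]; omega
    · by_cases h2 : i = 0 ∧ j = 1 ∧ k = 0
      · obtain ⟨rfl, rfl, rfl⟩ := h2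
        rw [if_pos ((key 0 1).mpr ⟨rfl, rfl, rfl⟩), if_neg, if_pos rfl, cc_zero, if_pos rfl]
        · norm_num
        · rw [key 1 0]; omega
      · rw [if_neg, if_neg]
        · by_cases hm : i + j + k = 1
          · rw [if_pos hm]
            -- then i = 0, j = 0, k = 1
            obtain ⟨rfl, rfl⟩ : i = 0 ∧ j = 0 := by omega
            rw [cc_zero, if_neg (by omega)]
            norm_num
          · rw [if_neg hm]; norm_num
        · rw [key 0 1]; omega
        · rw [key 1 0]; omega
  | (n + 2), i, j, k => by
    rw [show Q (n + 2) = (X 0 + X 1 + X 2) * Q (n + 1) - X 1 * X 2 * Q n from by rw [Q],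
      add_mul, add_mul, coeff_sub, coeff_add, coeff_add]
    have h0 : coeff (Finsupp.single 0 i + Finsupp.single 1 j + Finsupp.single 2 k)
        (X 0 * Q (n+1)) = if i = 0 then 0 else AA (n+1) (i-1) j k := by
      rcases i with _ | i'
      · rw [if_pos rfl, coeff_X_mul', if_neg]
        simp [Finsupp.single_apply]
      · rw [if_neg (Nat.succ_ne_zero _), Nat.add_sub_cancel]
        rw [show (Finsupp.single 0 (i'+1) + Finsupp.single 1 j + Finsupp.single 2 k : Fin 3 →₀ ℕ)
            = Finsupp.single 0 1 + (Finsupp.single 0 i' + Finsupp.single 1 j + Finsupp.single 2 k)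
            from by rw [Finsupp.single_add]; abel, coeff_X_mul]
        exact coeffQ (n+1) i' j k
    have h1 : coeff (Finsupp.single 0 i + Finsupp.single 1 j + Finsupp.single 2 k)
        (X 1 * Q (n+1)) = if j = 0 then 0 else AA (n+1) i (j-1) k := by
      rcases j with _ | j'
      · rw [if_pos rfl, coeff_X_mul', if_neg]
        simp [Finsupp.single_apply]
      · rw [if_neg (Nat.succ_ne_zero _), Nat.add_sub_cancel]
        rw [show (Finsupp.single 0 i + Finsupp.single 1 (j'+1) + Finsupp.single 2 k : Fin 3 →₀ ℕ)
            = Finsupp.single 1 1 + (Finsupp.single 0 i + Finsupp.single 1 j' + Finsupp.single 2 k)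
            from by rw [Finsupp.single_add]; abel, coeff_X_mul]
        exact coeffQ (n+1) i j' k
    have h2 : coeff (Finsupp.single 0 i + Finsupp.single 1 j + Finsupp.single 2 k)
        (X 2 * Q (n+1)) = if k = 0 then 0 else AA (n+1) i j (k-1) := by
      rcases k with _ | k'
      · rw [if_pos rfl, coeff_X_mul', if_neg]
        simp [Finsupp.single_apply]
      · rw [if_neg (Nat.succ_ne_zero _), Nat.add_sub_cancel]
        rw [show (Finsupp.single 0 i + Finsupp.single 1 j + Finsupp.single 2 (k'+1) : Fin 3 →₀ ℕ)
            = Finsupp.single 2 1 + (Finsupp.single 0 i + Finsupp.single 1 j + Finsupp.single 2 k')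
            from by rw [Finsupp.single_add]; abel, coeff_X_mul]
        exact coeffQ (n+1) i j k'
    have h3 : coeff (Finsupp.single 0 i + Finsupp.single 1 j + Finsupp.single 2 k)
        (X 1 * X 2 * Q n)
        = if j = 0 then 0 else if k = 0 then 0 else AA n i (j-1) (k-1) := by
      rw [mul_assoc]
      rcases j with _ | j'
      · rw [if_pos rfl, coeff_X_mul', if_neg]
        simp [Finsupp.single_apply]
      · rw [if_neg (Nat.succ_ne_zero _), Nat.add_sub_cancel]
        rw [show (Finsupp.single 0 i + Finsupp.single 1 (j'+1) + Finsupp.single 2 k : Fin 3 →₀ ℕ)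
            = Finsupp.single 1 1 + (Finsupp.single 0 i + Finsupp.single 1 j' + Finsupp.single 2 k)
            from by rw [Finsupp.single_add]; abel, coeff_X_mul]
        rcases k with _ | k'
        · rw [if_pos rfl, coeff_X_mul', if_neg]
          simp [Finsupp.single_apply]
        · rw [if_neg (Nat.succ_ne_zero _), Nat.add_sub_cancel]
          rw [show (Finsupp.single 0 i + Finsupp.single 1 j' + Finsupp.single 2 (k'+1) : Fin 3 →₀ ℕ)
              = Finsupp.single 2 1 + (Finsupp.single 0 i + Finsupp.single 1 j' + Finsupp.single 2 k')
              from by rw [Finsupp.single_add]; abel, coeff_X_mul]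
          exact coeffQ n i j' k'
    rw [h0, h1, h2, h3]
    exact (keyAA n i j k).symm

/-- The coefficients of the Markov–Fibonacci numerator `Q (n+1)` are products of two
binomials: `A_{i,j}(n+1) = C(n-j, n+1-i-j)·C(i+j, j)` for `i ≥ 0`, `0 ≤ j ≤ n`, and
the coefficient of `v^(n+1)` equals `1`. -/
theorem fibonacci_numerator_coeffs (n : ℕ) :
    (∀ i j : ℕ, j ≤ n →
      MvPolynomial.coeff
          (Finsupp.single 0 i + Finsupp.single 1 j + Finsupp.single 2 (n + 1 - i - j))
          (Q (n + 1))
        = zchoose ((n : ℤ) - j) ((n : ℤ) + 1 - i - j) * ((i + j).choose j : ℤ)) ∧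
    MvPolynomial.coeff (Finsupp.single 1 (n + 1)) (Q (n + 1)) = 1 := by
  constructor
  · intro i j hj
    rw [coeffQ (n+1) i j (n + 1 - i - j), AA]
    by_cases hij : i + j ≤ n + 1
    · rw [if_pos (by omega),
        cc_eq' (n+1) i j ((n:ℤ) - j) ((n:ℤ) + 1 - i - j) (by omega) (by push_cast; ring)
          (by push_cast; ring)]
    · rw [if_neg (by omega), zchoose_of_neg (by omega), zero_mul]
  · rw [show (Finsupp.single 1 (n+1) : Fin 3 →₀ ℕ)
        = Finsupp.single 0 0 + Finsupp.single 1 (n+1) + Finsupp.single 2 0 from by simp,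
      coeffQ (n+1) 0 (n+1) 0, AA, if_pos (by omega), cc_zero, if_pos rfl]
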